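/- arXiv:2104.08025 — 2 statements merged into one kernel-verified Lean document; each statement's English description precedes it below -/
import Mathlib

section
/- For every integer N ≥ 4, the real span of {φ_0, φ_1, …, φ_{N-4}} equals the set of all real polynomials p of degree at most N satisfying p(1) = p(-1) = 0 and p'(1) = p'(-1) = 0. -/
open Polynomial


lemma T_eval_one : ∀ n : ℕ, (Chebyshev.T ℝ n).eval 1 = 1
  | 0 => by simp
  | 1 => by simp
  | (n+2) => by
    have h := Chebyshev.T_add_two ℝ n
    push_cast
    push_cast at h
    rw [h]
    have h1 := T_eval_one (n+1)
    have h0 := T_eval_one n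
    push_cast at h1 h0
    simp [h1, h0]; norm_num

lemma T_eval_negOne : ∀ n : ℕ, (Chebyshev.T ℝ n).eval (-1) = (-1)^n
  | 0 => by simp
  | 1 => by simp
  | (n+2) => by
    have h := Chebyshev.T_add_two ℝ n
    push_cast
    push_cast at h
    rw [h]
    have h1 := T_eval_negOne (n+1)
    have h0 := T_eval_negOne n
    push_cast at h1 h0
    simp [h1, h0]; norm_num
    ring

lemma U_eval_one : ∀ n : ℕ, (Chebyshev.U ℝ n).eval 1 = n + 1
  | 0 => by simp
  | 1 => by simp [Chebyshev.U_one]; norm_num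
  | (n+2) => by
    have h := Chebyshev.U_add_two ℝ n
    push_cast
    push_cast at h
    rw [h]
    have h1 := U_eval_one (n+1)
    have h0 := U_eval_one n
    push_cast at h1 h0
    simp [h1, h0]; norm_num
    ring

lemma U_eval_negOne : ∀ n : ℕ, (Chebyshev.U ℝ n).eval (-1) = (-1)^n * (n + 1)
  | 0 => by simp
  | 1 => by simp [Chebyshev.U_one]; norm_num
  | (n+2) => by
    have h := Chebyshev.U_add_two ℝ n
    push_cast
    push_cast at h
    rw [h]
    have h1 := U_eval_negOne (n+1)
    have h0 := U_eval_negOne n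
    push_cast at h1 h0
    simp [h1, h0]; norm_num
    ring

lemma dT_eval_one (n : ℕ) : (derivative (Chebyshev.T ℝ n)).eval 1 = (n : ℝ)^2 := by
  cases n with
  | zero => simp
  | succ m =>
    have h := Chebyshev.T_derivative_eq_U (R := ℝ) (m + 1)
    have : ((m:ℤ) + 1 - 1) = (m : ℤ) := by ring
    rw [this] at h
    push_cast
    push_cast at h
    rw [h]
    have := U_eval_one m
    simp [this]
    ring

lemma dT_eval_negOne (n : ℕ) :
    (derivative (Chebyshev.T ℝ n)).eval (-1) = (-1)^(n+1) * (n : ℝ)^2 := by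
  cases n with
  | zero => simp
  | succ m =>
    have h := Chebyshev.T_derivative_eq_U (R := ℝ) (m + 1)
    have : ((m:ℤ) + 1 - 1) = (m : ℤ) := by ring
    rw [this] at h
    push_cast
    push_cast at h
    rw [h]
    have := U_eval_negOne m
    simp [this]
    ring

lemma T_degree_le : ∀ n : ℕ, (Chebyshev.T ℝ n).degree ≤ n
  | 0 => by simp
  | 1 => by simp
  | (n+2) => by
    have h := Chebyshev.T_add_two ℝ n
    push_cast
    push_cast at h
    rw [h]
    have h1 := T_degree_le (n+1)
    have h0 := T_degree_le n
    refine le_trans (degree_sub_le _ _) (max_le ?_ (le_trans h0 ?_))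
    · refine le_trans (degree_mul_le _ _) ?_
      have : degree (2 * X : ℝ[X]) ≤ 1 := by compute_degree
      calc degree (2*X : ℝ[X]) + degree (Chebyshev.T ℝ (n+1))
          ≤ 1 + ((n+1 : ℕ) : WithBot ℕ) := add_le_add this (by exact_mod_cast h1)
        _ ≤ ((n+2 : ℕ) : WithBot ℕ) := by
            rw [show ((n+2:ℕ) : WithBot ℕ) = 1 + ((n+1:ℕ) : WithBot ℕ) by push_cast; ring]
    · exact_mod_cast Nat.le_add_right n 2

lemma T_coeff_top : ∀ n : ℕ, (Chebyshev.T ℝ (n+1)).coeff (n+1) = 2^n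
  | 0 => by simp
  | (n+1) => by
    have h := Chebyshev.T_add_two ℝ n
    push_cast
    push_cast at h
    rw [show ((n:ℤ) + 1 + 1) = (n:ℤ) + 2 by ring, h]
    have h1 := T_coeff_top n
    push_cast at h1
    have hz : (Chebyshev.T ℝ (n:ℤ)).coeff (n+2) = 0 := by
      apply coeff_eq_zero_of_degree_lt
      exact lt_of_le_of_lt (T_degree_le n) (by exact_mod_cast Nat.lt_of_lt_of_le (by omega) le_rfl)
    rw [coeff_sub, hz, sub_zero, show (2 * X * Chebyshev.T ℝ ((n:ℤ)+1)) = X * (2 * Chebyshev.T ℝ ((n:ℤ)+1)) by ring,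
      coeff_X_mul, coeff_ofNat_mul, h1]
    ring

/-- The basis polynomials
`φ_k = T_k - (2(k+2)/(k+3)) T_{k+2} + ((k+1)/(k+3)) T_{k+4}`, as real polynomials. -/
noncomputable def phiPoly (k : ℕ) : Polynomial ℝ :=
  Polynomial.Chebyshev.T ℝ k
    - Polynomial.C (2 * ((k : ℝ) + 2) / ((k : ℝ) + 3)) * Polynomial.Chebyshev.T ℝ (k + 2)
    + Polynomial.C (((k : ℝ) + 1) / ((k : ℝ) + 3)) * Polynomial.Chebyshev.T ℝ (k + 4)

lemma phiPoly_def' (k : ℕ) : phiPoly k =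
    Chebyshev.T ℝ (k : ℤ)
      - C (2 * ((k : ℝ) + 2) / ((k : ℝ) + 3)) * Chebyshev.T ℝ ((k + 2 : ℕ) : ℤ)
      + C (((k : ℝ) + 1) / ((k : ℝ) + 3)) * Chebyshev.T ℝ ((k + 4 : ℕ) : ℤ) := by
  unfold phiPoly; push_cast; ring_nf

lemma hk3 (k : ℕ) : ((k : ℝ) + 3) ≠ 0 := by positivity

lemma phi_eval_one (k : ℕ) : (phiPoly k).eval 1 = 0 := by
  rw [phiPoly_def']
  simp only [eval_add, eval_sub, eval_mul, eval_C, T_eval_one]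
  field_simp
  ring

lemma phi_eval_negOne (k : ℕ) : (phiPoly k).eval (-1) = 0 := by
  rw [phiPoly_def']
  simp only [eval_add, eval_sub, eval_mul, eval_C, T_eval_negOne, pow_add]
  field_simp
  ring

lemma phi_deriv_eval_one (k : ℕ) : (derivative (phiPoly k)).eval 1 = 0 := by
  rw [phiPoly_def']
  simp only [derivative_add, derivative_sub, derivative_C_mul, eval_add, eval_sub, eval_mul,
    eval_C, dT_eval_one]
  push_cast
  field_simp
  ring

lemma phi_deriv_eval_negOne (k : ℕ) : (derivative (phiPoly k)).eval (-1) = 0 := by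
  rw [phiPoly_def']
  simp only [derivative_add, derivative_sub, derivative_C_mul, eval_add, eval_sub, eval_mul,
    eval_C, dT_eval_negOne]
  push_cast
  rw [show k+2+1 = k+1+2 by ring, show k+4+1 = k+1+4 by ring, pow_add, pow_add]
  field_simp
  ring

lemma phi_degree_le (k : ℕ) : (phiPoly k).degree ≤ (k + 4 : ℕ) := by
  rw [phiPoly_def']
  refine le_trans (degree_add_le _ _) (max_le (le_trans (degree_sub_le _ _) (max_le ?_ ?_)) ?_)
  · exact le_trans (T_degree_le k) (by exact_mod_cast Nat.le_add_right k 4)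
  · refine le_trans (degree_mul_le _ _) ?_
    refine le_trans (add_le_add degree_C_le (T_degree_le (k+2))) ?_
    simpa using (by exact_mod_cast Nat.le_add_right (k+2) 2 : ((k+2:ℕ) : WithBot ℕ) ≤ ((k+4:ℕ) : WithBot ℕ))
  · refine le_trans (degree_mul_le _ _) ?_
    refine le_trans (add_le_add degree_C_le (T_degree_le (k+4))) ?_
    simp

lemma phi_coeff_top (k : ℕ) :
    (phiPoly k).coeff (k+4) = (((k : ℝ) + 1) / ((k : ℝ) + 3)) * 2^(k+3) := by
  rw [phiPoly_def']
  rw [coeff_add, coeff_sub, coeff_C_mul, coeff_C_mul]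
  have h1 : (Chebyshev.T ℝ (k : ℤ)).coeff (k+4) = 0 :=
    coeff_eq_zero_of_degree_lt (lt_of_le_of_lt (T_degree_le k) (by exact_mod_cast by omega))
  have h2 : (Chebyshev.T ℝ ((k+2 : ℕ) : ℤ)).coeff (k+4) = 0 :=
    coeff_eq_zero_of_degree_lt (lt_of_le_of_lt (T_degree_le (k+2)) (by exact_mod_cast by omega))
  have h3 : (Chebyshev.T ℝ ((k+4 : ℕ) : ℤ)).coeff (k+4) = 2^(k+3) := by
    have := T_coeff_top (k+3)
    push_cast at this ⊢
    convert this using 3 <;> push_cast <;> ring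
  rw [h1, h2, h3]
  ring

lemma phi_coeff_ne_zero (k : ℕ) : (phiPoly k).coeff (k+4) ≠ 0 := by
  rw [phi_coeff_top]
  have := hk3 k
  have : (0:ℝ) < ((k : ℝ) + 1) / ((k : ℝ) + 3) * 2^(k+3) := by positivity
  linarith

lemma phi_natDegree (k : ℕ) : (phiPoly k).natDegree = k + 4 := by
  have hc := phi_coeff_ne_zero k
  exact le_antisymm (natDegree_le_iff_degree_le.2 (phi_degree_le k)) (le_natDegree_of_ne_zero hc)

lemma phi_ne_zero (k : ℕ) : phiPoly k ≠ 0 := fun h =>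
  phi_coeff_ne_zero k (by simp [h])

noncomputable def M : ℝ[X] := ((X - C 1) * (X - C (-1)))^2

lemma sq_dvd_of_root_deriv {p : ℝ[X]} {a : ℝ} (h1 : p.eval a = 0)
    (h2 : (derivative p).eval a = 0) : (X - C a)^2 ∣ p := by
  obtain ⟨q, hq⟩ := (dvd_iff_isRoot.2 h1)
  have hd : derivative p = q + (X - C a) * derivative q := by
    rw [hq, derivative_mul]; simp [sub_mul]
  have hqa : q.eval a = 0 := by
    have := h2
    rw [hd] at this
    simpa using this
  obtain ⟨r, hr⟩ := dvd_iff_isRoot.2 hqa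
  exact ⟨r, by rw [hq, hr]; ring⟩

lemma M_dvd {p : ℝ[X]} (h1 : p.eval 1 = 0) (h2 : p.eval (-1) = 0)
    (h3 : (derivative p).eval 1 = 0) (h4 : (derivative p).eval (-1) = 0) : M ∣ p := by
  have d1 : (X - C (1:ℝ))^2 ∣ p := sq_dvd_of_root_deriv h1 h3
  have d2 : (X - C (-1:ℝ))^2 ∣ p := sq_dvd_of_root_deriv h2 h4
  have hco : IsCoprime ((X - C (1:ℝ))^2) ((X - C (-1:ℝ))^2) :=
    (isCoprime_X_sub_C_of_isUnit_sub (by norm_num)).pow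
  have := hco.mul_dvd d1 d2
  rwa [show M = (X - C (1:ℝ))^2 * (X - C (-1:ℝ))^2 by rw [M]; ring]

lemma M_monic : (M : ℝ[X]).Monic := by
  unfold M
  exact ((monic_X_sub_C 1).mul (monic_X_sub_C (-1))).pow 2

lemma M_natDegree : (M : ℝ[X]).natDegree = 4 := by
  unfold M
  rw [natDegree_pow, natDegree_mul (X_sub_C_ne_zero 1) (X_sub_C_ne_zero (-1)),
    natDegree_X_sub_C, natDegree_X_sub_C]

lemma exists_psi (d : ℕ) : ∃ ψ : ℝ[X], phiPoly d = M * ψ ∧ ψ.natDegree = d ∧ ψ ≠ 0 := by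
  obtain ⟨ψ, hψ⟩ := M_dvd (phi_eval_one d) (phi_eval_negOne d)
    (phi_deriv_eval_one d) (phi_deriv_eval_negOne d)
  have hψ0 : ψ ≠ 0 := by
    rintro rfl
    exact phi_ne_zero d (by simpa using hψ)
  refine ⟨ψ, hψ, ?_, hψ0⟩
  have := phi_natDegree d
  rw [hψ, natDegree_mul M_monic.ne_zero hψ0, M_natDegree] at this
  omega

lemma mulM_mem_span (m : ℕ) : ∀ n : ℕ, ∀ q : ℝ[X], q.natDegree ≤ n → n ≤ m →
    M * q ∈ Submodule.span ℝ (phiPoly '' {k : ℕ | k ≤ m}) := by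
  intro n
  induction n using Nat.strong_induction_on with
  | _ n IH =>
    intro q hq hnm
    by_cases hq0 : q = 0
    · simp [hq0]
    obtain ⟨ψ, hψeq, hψdeg, hψ0⟩ := exists_psi q.natDegree
    set c := q.leadingCoeff / ψ.leadingCoeff with hc
    set r := q - C c * ψ with hr
    have hψlc : ψ.leadingCoeff ≠ 0 := leadingCoeff_ne_zero.2 hψ0
    have hrc : r.coeff q.natDegree = 0 := by
      rw [hr, coeff_sub, coeff_C_mul]
      conv_lhs => rw [show ψ.coeff q.natDegree = ψ.leadingCoeff by
        rw [← hψdeg, coeff_natDegree]]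
      rw [hc, div_mul_cancel₀ _ hψlc, coeff_natDegree, sub_self]
    have hrdeg : r.natDegree ≤ q.natDegree :=
      le_trans (natDegree_sub_le _ _) (by
        simp only [max_le_iff]
        exact ⟨le_refl _, le_trans (natDegree_C_mul_le _ _) (le_of_eq hψdeg)⟩)
    have hphimem : phiPoly q.natDegree ∈
        Submodule.span ℝ (phiPoly '' {k : ℕ | k ≤ m}) :=
      Submodule.subset_span ⟨q.natDegree, by simpa using le_trans hq hnm, rfl⟩
    have hq_eq : M * q = c • phiPoly q.natDegree + M * r := by
      rw [smul_eq_C_mul, hψeq, hr]; ring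
    rw [hq_eq]
    refine Submodule.add_mem _ (Submodule.smul_mem _ _ hphimem) ?_
    by_cases hr0 : r = 0
    · simp [hr0]
    · have hrlt : r.natDegree < q.natDegree := by
        rcases lt_or_eq_of_le hrdeg with h | h
        · exact h
        · exfalso
          apply leadingCoeff_ne_zero.2 hr0
          rw [leadingCoeff, h]
          exact hrc
      exact IH r.natDegree (lt_of_lt_of_le hrlt hq) r le_rfl
        (le_trans (le_of_lt (lt_of_lt_of_le hrlt hq)) hnm)

/-- For `N ≥ 4`, the real span of `{φ_0, …, φ_{N-4}}` is exactly the space of real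
polynomials of degree at most `N` satisfying the clamped boundary conditions
`p(±1) = 0` and `p'(±1) = 0`. -/
theorem span_phiPoly_eq_clamped_polynomials (N : ℕ) (hN : 4 ≤ N) :
    (Submodule.span ℝ (phiPoly '' {k : ℕ | k ≤ N - 4}) : Set (Polynomial ℝ)) =
      {p : Polynomial ℝ | p.degree ≤ (N : ℕ) ∧ p.eval 1 = 0 ∧ p.eval (-1) = 0 ∧
        (derivative p).eval 1 = 0 ∧ (derivative p).eval (-1) = 0} := by
  ext p
  simp only [SetLike.mem_coe, Set.mem_setOf_eq]
  constructor
  · intro hp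
    set W : Submodule ℝ ℝ[X] := degreeLE ℝ N ⊓ LinearMap.ker (leval (1:ℝ))
      ⊓ LinearMap.ker (leval (-1:ℝ))
      ⊓ LinearMap.ker ((leval (1:ℝ)).comp (derivative : ℝ[X] →ₗ[ℝ] ℝ[X]))
      ⊓ LinearMap.ker ((leval (-1:ℝ)).comp (derivative : ℝ[X] →ₗ[ℝ] ℝ[X])) with hWdef
    have hWmem : ∀ q : ℝ[X], q ∈ W ↔ (q.degree ≤ (N : ℕ) ∧ q.eval 1 = 0 ∧ q.eval (-1) = 0 ∧
        (derivative q).eval 1 = 0 ∧ (derivative q).eval (-1) = 0) := by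
      intro q
      simp only [hWdef, Submodule.mem_inf, LinearMap.mem_ker, LinearMap.comp_apply,
        leval_apply, mem_degreeLE, LinearMap.coe_mk]
      tauto
    have hle : Submodule.span ℝ (phiPoly '' {k : ℕ | k ≤ N - 4}) ≤ W := by
      rw [Submodule.span_le]
      rintro _ ⟨k, hk, rfl⟩
      rw [SetLike.mem_coe, hWmem]
      refine ⟨le_trans (phi_degree_le k) ?_, phi_eval_one k, phi_eval_negOne k,
        phi_deriv_eval_one k, phi_deriv_eval_negOne k⟩
      · have hk' : k ≤ N - 4 := hk
        exact_mod_cast (by omega : k + 4 ≤ N)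
    rw [← hWmem]
    exact hle hp
  · rintro ⟨hdeg, h1, h2, h3, h4⟩
    obtain ⟨q, hq⟩ := M_dvd h1 h2 h3 h4
    by_cases hq0 : q = 0
    · rw [hq, hq0, mul_zero]
      exact Submodule.zero_mem _
    · have hnd : p.natDegree ≤ N := natDegree_le_iff_degree_le.2 hdeg
      rw [hq, natDegree_mul M_monic.ne_zero hq0, M_natDegree] at hnd
      rw [hq]
      exact mulM_mem_span (N - 4) q.natDegree q le_rfl (by omega)
end

section
/- The internal-model pair (G₁, G₂) is controllable: for every λ ∈ ℂ and every vector v ∈ ℂ^{4q+2}, if v* G₁ = λ v* and v* G₂ = 0 then v = 0 (Hautus test). Equivalently, for every λ ∈ ℂ the (4q+2) × (4q+4) complex matrix [λI - G₁, G₂] has rank 4q+2. -/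
/-- The internal model matrix `G₁ = diag(0₂, Ω₁, …, Ω_q)`, where
`Ω_k = [[0₂, ω_k I₂], [-ω_k I₂, 0₂]]`, written entrywise.  Rows/columns `0,1` form the
`2×2` zero block; for `i ≥ 2` the block index is `(i-2)/4` (frequency `ω_{(i-2)/4+1}`)
and the position within the block is `(i-2)%4`. -/
noncomputable def IMG1 (q : ℕ) (ω : ℕ → ℝ) : Matrix (Fin (4 * q + 2)) (Fin (4 * q + 2)) ℂ :=
  Matrix.of fun i j =>
    if 2 ≤ (i : ℕ) ∧ 2 ≤ (j : ℕ) ∧ ((i : ℕ) - 2) / 4 = ((j : ℕ) - 2) / 4 then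
      (if ((j : ℕ) - 2) % 4 = ((i : ℕ) - 2) % 4 + 2 then ((ω (((i : ℕ) - 2) / 4 + 1) : ℝ) : ℂ)
       else if ((i : ℕ) - 2) % 4 = ((j : ℕ) - 2) % 4 + 2 then
         -((ω (((i : ℕ) - 2) / 4 + 1) : ℝ) : ℂ)
       else 0)
    else 0

/-- The internal model input matrix `G₂ = [I₂, I₂, 0₂, I₂, 0₂, …, I₂, 0₂]ᵀ`,
written entrywise. -/
def IMG2 (q : ℕ) : Matrix (Fin (4 * q + 2)) (Fin 2) ℂ :=
  Matrix.of fun i j =>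
    if (i : ℕ) < 2 then (if (i : ℕ) = (j : ℕ) then 1 else 0)
    else if ((i : ℕ) - 2) % 4 = (j : ℕ) then 1 else 0

private lemma img1_col_lt2 (q : ℕ) (ω : ℕ → ℝ) (w : Fin (4*q+2) → ℂ)
    (j : Fin (4*q+2)) (hj : (j:ℕ) < 2) :
    ∑ i, w i * IMG1 q ω i j = 0 := by
  apply Finset.sum_eq_zero
  intro i _
  have h : IMG1 q ω i j = 0 := by
    simp only [IMG1, Matrix.of_apply]
    rw [if_neg]
    rintro ⟨-, h2, -⟩; omega
  rw [h, mul_zero]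

private lemma img1_colA (q : ℕ) (ω : ℕ → ℝ) (w : Fin (4*q+2) → ℂ)
    (b c : ℕ) (hb : b < q) (hc : c < 2) (j i' : Fin (4*q+2))
    (hj : (j:ℕ) = 2+4*b+c) (hi : (i':ℕ) = 2+4*b+c+2) :
    ∑ i, w i * IMG1 q ω i j = w i' * (-((ω (b+1) : ℝ) : ℂ)) := by
  rw [Finset.sum_eq_single i']
  · congr 1
    simp only [IMG1, Matrix.of_apply, hj, hi]
    rw [if_pos (by omega), if_neg (by omega), if_pos (by omega)]
    have h4 : (2+4*b+c+2-2)/4 = b := by omega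
    rw [h4]
  · intro i _ hne
    have hiv : (i:ℕ) ≠ 2+4*b+c+2 := fun h => hne (Fin.ext (h.trans hi.symm))
    have h : IMG1 q ω i j = 0 := by
      simp only [IMG1, Matrix.of_apply, hj]
      split_ifs with h1 h2 h3
      · exfalso; omega
      · exfalso; omega
      · rfl
      · rfl
    rw [h, mul_zero]
  · intro h; exact absurd (Finset.mem_univ _) h

private lemma img1_colB (q : ℕ) (ω : ℕ → ℝ) (w : Fin (4*q+2) → ℂ)
    (b c : ℕ) (hb : b < q) (hc : c < 2) (j i' : Fin (4*q+2))
    (hj : (j:ℕ) = 2+4*b+c+2) (hi : (i':ℕ) = 2+4*b+c) :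
    ∑ i, w i * IMG1 q ω i j = w i' * ((ω (b+1) : ℝ) : ℂ) := by
  rw [Finset.sum_eq_single i']
  · congr 1
    simp only [IMG1, Matrix.of_apply, hj, hi]
    rw [if_pos (by omega), if_pos (by omega)]
    have h4 : (2+4*b+c-2)/4 = b := by omega
    rw [h4]
  · intro i _ hne
    have hiv : (i:ℕ) ≠ 2+4*b+c := fun h => hne (Fin.ext (h.trans hi.symm))
    have h : IMG1 q ω i j = 0 := by
      simp only [IMG1, Matrix.of_apply, hj]
      split_ifs with h1 h2 h3
      · exfalso; omega
      · exfalso; omega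
      · rfl
      · rfl
    rw [h, mul_zero]
  · intro h; exact absurd (Finset.mem_univ _) h

private lemma img2_eq_one (q : ℕ) (i : Fin (4*q+2)) (j : Fin 2)
    (h : ((i:ℕ) < 2 ∧ (i:ℕ) = (j:ℕ)) ∨ (2 ≤ (i:ℕ) ∧ ((i:ℕ)-2) % 4 = (j:ℕ))) :
    IMG2 q i j = 1 := by
  simp only [IMG2, Matrix.of_apply]
  split_ifs with h1 h2 h3
  · rfl
  · exfalso; omega
  · rfl
  · exfalso; omega

private lemma img2_eq_zero (q : ℕ) (i : Fin (4*q+2)) (j : Fin 2)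
    (h : ¬(((i:ℕ) < 2 ∧ (i:ℕ) = (j:ℕ)) ∨ (2 ≤ (i:ℕ) ∧ ((i:ℕ)-2) % 4 = (j:ℕ)))) :
    IMG2 q i j = 0 := by
  simp only [IMG2, Matrix.of_apply]
  push_neg at h
  split_ifs with h1 h2 h3
  · exfalso; exact (h.1 h1) h2
  · rfl
  · exfalso; exact (h.2 (by omega)) h3
  · rfl

private lemma img2_sum (q : ℕ) (w : Fin (4*q+2) → ℂ) (j : Fin 2) (i0 : Fin (4*q+2))
    (h : ∀ i, i ≠ i0 → IMG2 q i j = 0 ∨ w i = 0) :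
    ∑ i, w i * IMG2 q i j = w i0 * IMG2 q i0 j := by
  rw [Finset.sum_eq_single i0]
  · intro i _ hne
    rcases h i hne with h0 | h0
    · rw [h0, mul_zero]
    · rw [h0, zero_mul]
  · intro h; exact absurd (Finset.mem_univ _) h

/-- The internal-model pair `(G₁, G₂)` is controllable (Hautus test): for every `λ ∈ ℂ`
and `v ∈ ℂ^{4q+2}`, if `v* G₁ = λ v*` and `v* G₂ = 0` then `v = 0`. -/
theorem internal_model_controllable (q : ℕ) (hq : 1 ≤ q) (ω : ℕ → ℝ)
    (hpos : ∀ k, 1 ≤ k → k ≤ q → 0 < ω k)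
    (hmono : ∀ k l, 1 ≤ k → k < l → l ≤ q → ω k < ω l) :
    ∀ (lam : ℂ) (v : Fin (4 * q + 2) → ℂ),
      Matrix.vecMul (star v) (IMG1 q ω) = lam • star v →
      Matrix.vecMul (star v) (IMG2 q) = 0 →
      v = 0 := by
  intro lam v h1 h2
  set w : Fin (4*q+2) → ℂ := star v with hwdef
  have H1 : ∀ j, ∑ i, w i * IMG1 q ω i j = lam * w j := by
    intro j
    have := congrFun h1 j
    simpa [Matrix.vecMul, dotProduct] using this
  have H2 : ∀ j, ∑ i, w i * IMG2 q i j = 0 := by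
    intro j
    have := congrFun h2 j
    simpa [Matrix.vecMul, dotProduct] using this
  have hωpos : ∀ b, b < q → (0:ℝ) < ω (b+1) := fun b hb => hpos (b+1) (by omega) (by omega)
  -- block equations
  have eqA : ∀ b, b < q → ∀ c, c < 2 → ∀ (j i' : Fin (4*q+2)),
      (j:ℕ) = 2+4*b+c → (i':ℕ) = 2+4*b+c+2 →
      w i' * (-((ω (b+1) : ℝ) : ℂ)) = lam * w j := by
    intro b hb c hc j i' hj hi
    exact (img1_colA q ω w b c hb hc j i' hj hi).symm.trans (H1 j)
  have eqB : ∀ b, b < q → ∀ c, c < 2 → ∀ (j i' : Fin (4*q+2)),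
      (j:ℕ) = 2+4*b+c+2 → (i':ℕ) = 2+4*b+c →
      w i' * ((ω (b+1) : ℝ) : ℂ) = lam * w j := by
    intro b hb c hc j i' hj hi
    exact (img1_colB q ω w b c hb hc j i' hj hi).symm.trans (H1 j)
  have key : ∀ b c : ℕ, b < q → c < 4 → ∀ i : Fin (4*q+2), (i:ℕ) = 2+4*b+c →
      (lam^2 + ((ω (b+1):ℝ):ℂ)^2) * w i = 0 := by
    intro b c hb hc i hi
    interval_cases c
    · have eA := eqA b hb 0 (by norm_num) i ⟨2+4*b+2, by omega⟩ (by omega) rfl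
      have eB := eqB b hb 0 (by norm_num) ⟨2+4*b+2, by omega⟩ i rfl (by omega)
      linear_combination (-lam) * eA + ((ω (b+1):ℝ):ℂ) * eB
    · have eA := eqA b hb 1 (by norm_num) i ⟨2+4*b+3, by omega⟩ (by omega) rfl
      have eB := eqB b hb 1 (by norm_num) ⟨2+4*b+3, by omega⟩ i rfl (by omega)
      linear_combination (-lam) * eA + ((ω (b+1):ℝ):ℂ) * eB
    · have eA := eqA b hb 0 (by norm_num) ⟨2+4*b, by omega⟩ i rfl (by omega)
      have eB := eqB b hb 0 (by norm_num) i ⟨2+4*b, by omega⟩ (by omega) rfl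
      linear_combination (-((ω (b+1):ℝ):ℂ)) * eA + (-lam) * eB
    · have eA := eqA b hb 1 (by norm_num) ⟨2+4*b+1, by omega⟩ i rfl (by omega)
      have eB := eqB b hb 1 (by norm_num) i ⟨2+4*b+1, by omega⟩ (by omega) rfl
      linear_combination (-((ω (b+1):ℝ):ℂ)) * eA + (-lam) * eB
  suffices hW : ∀ i, w i = 0 by
    funext i
    have := hW i
    rw [hwdef, Pi.star_apply] at this
    simpa using congrArg star this
  by_cases hall : ∀ b, b < q → lam^2 + ((ω (b+1):ℝ):ℂ)^2 ≠ 0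
  · -- no resonance: all block components vanish
    have hblk : ∀ i : Fin (4*q+2), 2 ≤ (i:ℕ) → w i = 0 := by
      intro i hi
      have hb : ((i:ℕ)-2)/4 < q := by have := i.isLt; omega
      have hk := key (((i:ℕ)-2)/4) (((i:ℕ)-2)%4) hb (by omega) i (by omega)
      exact (mul_eq_zero.1 hk).resolve_left (hall _ hb)
    have hz0 : ∀ i, i ≠ (⟨0, by omega⟩ : Fin (4*q+2)) →
        IMG2 q i ⟨0, by omega⟩ = 0 ∨ w i = 0 := by
      intro i hne
      by_cases h : 2 ≤ (i:ℕ)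
      · exact Or.inr (hblk i h)
      · have : (i:ℕ) = 1 := by
          have : (i:ℕ) ≠ 0 := fun hh => hne (Fin.ext hh)
          omega
        exact Or.inl (img2_eq_zero q i _ (by rw [this]; push_neg; exact ⟨fun _ => by norm_num, fun h => by omega⟩))
    have hz1 : ∀ i, i ≠ (⟨1, by omega⟩ : Fin (4*q+2)) →
        IMG2 q i ⟨1, by omega⟩ = 0 ∨ w i = 0 := by
      intro i hne
      by_cases h : 2 ≤ (i:ℕ)
      · exact Or.inr (hblk i h)
      · have : (i:ℕ) = 0 := by
          have : (i:ℕ) ≠ 1 := fun hh => hne (Fin.ext hh)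
          omega
        exact Or.inl (img2_eq_zero q i _ (by rw [this]; push_neg; exact ⟨fun _ => by norm_num, fun h => by omega⟩))
    have w0 : w ⟨0, by omega⟩ = 0 := by
      have hs := (img2_sum q w ⟨0, by omega⟩ ⟨0, by omega⟩ hz0).symm.trans (H2 ⟨0, by omega⟩)
      rw [img2_eq_one q _ _ (Or.inl ⟨by norm_num, rfl⟩), mul_one] at hs
      exact hs
    have w1 : w ⟨1, by omega⟩ = 0 := by
      have hs := (img2_sum q w ⟨1, by omega⟩ ⟨1, by omega⟩ hz1).symm.trans (H2 ⟨1, by omega⟩)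
      rw [img2_eq_one q _ _ (Or.inl ⟨by norm_num, rfl⟩), mul_one] at hs
      exact hs
    intro i
    by_cases h : 2 ≤ (i:ℕ)
    · exact hblk i h
    · rcases (by omega : (i:ℕ) = 0 ∨ (i:ℕ) = 1) with h0 | h0
      · rw [show i = (⟨0, by omega⟩ : Fin (4*q+2)) from Fin.ext h0]; exact w0
      · rw [show i = (⟨1, by omega⟩ : Fin (4*q+2)) from Fin.ext h0]; exact w1
  · -- resonance at a unique block b₀
    push_neg at hall
    obtain ⟨b₀, hb₀, hbad⟩ := hall
    have hlam : lam ≠ 0 := by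
      intro h
      rw [h] at hbad
      have hsq : ((ω (b₀+1):ℝ):ℂ)^2 = 0 := by linear_combination hbad
      have : ((ω (b₀+1):ℝ):ℂ) = 0 := by
        exact pow_eq_zero_iff (n := 2) (by norm_num) |>.1 hsq
      have : ω (b₀+1) = 0 := by exact_mod_cast this
      exact absurd this (hωpos b₀ hb₀).ne'
    have w0 : w ⟨0, by omega⟩ = 0 := by
      have := (img1_col_lt2 q ω w ⟨0, by omega⟩ (by norm_num)).symm.trans (H1 ⟨0, by omega⟩)
      exact (mul_eq_zero.1 this.symm).resolve_left hlam
    have w1 : w ⟨1, by omega⟩ = 0 := by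
      have := (img1_col_lt2 q ω w ⟨1, by omega⟩ (by norm_num)).symm.trans (H1 ⟨1, by omega⟩)
      exact (mul_eq_zero.1 this.symm).resolve_left hlam
    have hgood : ∀ b, b < q → b ≠ b₀ → lam^2 + ((ω (b+1):ℝ):ℂ)^2 ≠ 0 := by
      intro b hb hne h
      have hsq : ((ω (b+1):ℝ):ℂ)^2 = ((ω (b₀+1):ℝ):ℂ)^2 := by
        linear_combination h - hbad
      have hsqR : (ω (b+1))^2 = (ω (b₀+1))^2 := by exact_mod_cast hsq
      have p1 := hωpos b hb
      have p2 := hωpos b₀ hb₀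
      rcases lt_trichotomy b b₀ with hlt | heq | hlt
      · have := hmono (b+1) (b₀+1) (by omega) (by omega) (by omega)
        nlinarith
      · exact hne heq
      · have := hmono (b₀+1) (b+1) (by omega) (by omega) (by omega)
        nlinarith
    have hblk : ∀ i : Fin (4*q+2), 2 ≤ (i:ℕ) → ((i:ℕ)-2)/4 ≠ b₀ → w i = 0 := by
      intro i hi hne
      have hb : ((i:ℕ)-2)/4 < q := by have := i.isLt; omega
      have hk := key (((i:ℕ)-2)/4) (((i:ℕ)-2)%4) hb (by omega) i (by omega)
      exact (mul_eq_zero.1 hk).resolve_left (hgood _ hb hne)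
    -- component r=0 of block b₀ via G₂ column 0
    have wlt2 : ∀ i : Fin (4*q+2), (i:ℕ) < 2 → w i = 0 := by
      intro i h
      rcases (by omega : (i:ℕ) = 0 ∨ (i:ℕ) = 1) with h0 | h0
      · rw [show i = (⟨0, by omega⟩ : Fin (4*q+2)) from Fin.ext h0]; exact w0
      · rw [show i = (⟨1, by omega⟩ : Fin (4*q+2)) from Fin.ext h0]; exact w1
    have key2 : ∀ cc : ℕ, ∀ _hcc : cc < 2, w ⟨2+4*b₀+cc, by omega⟩ = 0 := by
      intro cc hcc
      have hz : ∀ i, i ≠ (⟨2+4*b₀+cc, by omega⟩ : Fin (4*q+2)) →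
          IMG2 q i ⟨cc, by omega⟩ = 0 ∨ w i = 0 := by
        intro i hne
        have hiv : (i:ℕ) ≠ 2+4*b₀+cc := fun hh => hne (Fin.ext hh)
        by_cases h : 2 ≤ (i:ℕ)
        · by_cases hbb : ((i:ℕ)-2)/4 = b₀
          · refine Or.inl (img2_eq_zero q i _ ?_)
            push_neg
            refine ⟨fun hh => absurd h (by omega), fun _ hh => ?_⟩
            have : ((⟨cc, by omega⟩ : Fin 2) : ℕ) = cc := rfl
            rw [this] at hh
            omega
          · exact Or.inr (hblk i h hbb)
        · exact Or.inr (wlt2 i (by omega))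
      have hs := (img2_sum q w ⟨cc, by omega⟩ ⟨2+4*b₀+cc, by omega⟩ hz).symm.trans (H2 ⟨cc, by omega⟩)
      rw [img2_eq_one q _ _ (Or.inr ⟨by show 2 ≤ 2+4*b₀+cc; omega,
        by show (2+4*b₀+cc-2)%4 = ((⟨cc, by omega⟩ : Fin 2):ℕ); show (2+4*b₀+cc-2)%4 = cc; omega⟩), mul_one] at hs
      exact hs
    have key3 : ∀ cc : ℕ, ∀ _hcc : cc < 2, w ⟨2+4*b₀+cc+2, by omega⟩ = 0 := by
      intro cc hcc
      have eB := eqB b₀ hb₀ cc hcc ⟨2+4*b₀+cc+2, by omega⟩ ⟨2+4*b₀+cc, by omega⟩ rfl rfl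
      rw [key2 cc hcc, zero_mul] at eB
      exact (mul_eq_zero.1 eB.symm).resolve_left hlam
    intro i
    by_cases h : 2 ≤ (i:ℕ)
    · by_cases hbb : ((i:ℕ)-2)/4 = b₀
      · rcases (by omega : ((i:ℕ)-2)%4 = 0 ∨ ((i:ℕ)-2)%4 = 1 ∨ ((i:ℕ)-2)%4 = 2 ∨ ((i:ℕ)-2)%4 = 3) with h0 | h0 | h0 | h0
        · rw [show i = (⟨2+4*b₀+0, by omega⟩ : Fin (4*q+2)) from Fin.ext (by show (i:ℕ) = 2+4*b₀+0; omega)]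
          exact key2 0 (by norm_num)
        · rw [show i = (⟨2+4*b₀+1, by omega⟩ : Fin (4*q+2)) from Fin.ext (by show (i:ℕ) = 2+4*b₀+1; omega)]
          exact key2 1 (by norm_num)
        · rw [show i = (⟨2+4*b₀+0+2, by omega⟩ : Fin (4*q+2)) from Fin.ext (by show (i:ℕ) = 2+4*b₀+0+2; omega)]
          exact key3 0 (by norm_num)
        · rw [show i = (⟨2+4*b₀+1+2, by omega⟩ : Fin (4*q+2)) from Fin.ext (by show (i:ℕ) = 2+4*b₀+1+2; omega)]
          exact key3 1 (by norm_num)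
      · exact hblk i h hbb
    · exact wlt2 i (by omega)
end
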